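/- Let k be a field, n ≥ 1, and R_n = k[X_1,…,X_n]. The multiplication operators m_{X_i} and the Demazure operators ∂_i satisfy the defining relations of the nil Hecke algebra in End_k(R_n): (i) ∂_i ∘ ∂_i = 0 for all 1 ≤ i ≤ n−1; (ii) ∂_i ∘ ∂_j = ∂_j ∘ ∂_i whenever |i − j| ≥ 2; (iii) ∂_i ∘ ∂_{i+1} ∘ ∂_i = ∂_{i+1} ∘ ∂_i ∘ ∂_{i+1} for 1 ≤ i ≤ n−2; (iv) m_{X_{i+1}} ∘ ∂_i − ∂_i ∘ m_{X_i} = id and ∂_i ∘ m_{X_{i+1}} − m_{X_i} ∘ ∂_i = id; (v) ∂_i commutes with m_{X_j} whenever j ∉ {i, i+1}, and all multiplication operators commute with each other. In particular, the polynomial representation of the nil Hecke algebra NH_n on R_n is well defined. -/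

import Mathlib

/-!
STATEMENT 14: The multiplication operators and Demazure operators on
`R = k[X_1, …, X_n]` (here realized with `n + 1` variables, `n ≥ 0`, so that the
number of variables is an arbitrary integer `≥ 1`) satisfy the defining relations
of the nil Hecke algebra.

We quantify over any family `D i` of `k`-linear endomorphisms satisfying the
defining property of the Demazure operators
`(X_i − X_{i+1}) · D_i f = σ_i f − f`; this determines `D` uniquely since
`X_i − X_{i+1}` is a nonzerodivisor.
-/

open MvPolynomial

/-- The simple transposition `σ_i`, acting on polynomials by interchanging the
variables `X_i` and `X_{i+1}`. -/
noncomputable def simpleTransp {k : Type} [Field k] {n : ℕ}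
    (i : Fin n) (f : MvPolynomial (Fin (n + 1)) k) : MvPolynomial (Fin (n + 1)) k :=
  rename (Equiv.swap i.castSucc i.succ) f

/-- `D` is the family of Demazure operators: `D i` is the unique `k`-linear map with
`(X_i − X_{i+1}) · D_i f = σ_i f − f`. -/
def IsDemazureFamily {k : Type} [Field k] {n : ℕ}
    (D : Fin n → Module.End k (MvPolynomial (Fin (n + 1)) k)) : Prop :=
  ∀ (i : Fin n) (f : MvPolynomial (Fin (n + 1)) k),
    (X i.castSucc - X i.succ) * D i f = simpleTransp i f - f

/-!
Write `s_ab` for the transposition of the variables `a, b` and `∂_ab` for the corresponding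
Demazure operator, so `(X a - X b) ∂_ab f = s_ab f - f`. Since `X a - X b` is a nonzerodivisor,
every relation can be checked after multiplying by differences of variables, which turns it
into an identity between permuted copies of `f`. Applying `s_ab` to the defining equation shows
that `∂_ab f` is `s_ab`-invariant, whence `∂_ab² = 0`; the twisted Leibniz rule
`∂_ab (f g) = s_ab f · ∂_ab g + ∂_ab f · g` gives the relations with multiplication operators. For the braid relation, `(X a - X b) (X b - X c) (X a - X c) ∂_ab ∂_bc ∂_ab f` is,
up to sign, the antisymmetrization of `f` over the permutations of `a, b, c`; this expression
is symmetric under exchanging the roles of `∂_ab` and `∂_bc`.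
-/

namespace MvPolynomial

variable {ι R : Type*} [CommRing R]

theorem X_sub_X_ne_zero [Nontrivial R] {a b : ι} (hab : a ≠ b) :
    (X a - X b : MvPolynomial ι R) ≠ 0 :=
  sub_ne_zero.mpr fun h => hab (X_injective h)

variable [DecidableEq ι]

theorem rename_swap_rename_swap (a b : ι) (p : MvPolynomial ι R) :
    rename (Equiv.swap a b) (rename (Equiv.swap a b) p) = p := by
  rw [rename_rename, ← Equiv.Perm.coe_mul, Equiv.swap_mul_self, Equiv.Perm.coe_one, rename_id,
    AlgHom.id_apply]

theorem rename_swap_X_of_ne {a b c : ι} (hca : c ≠ a) (hcb : c ≠ b) :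
    rename (Equiv.swap a b) (X c : MvPolynomial ι R) = X c := by
  rw [rename_X, Equiv.swap_apply_of_ne_of_ne hca hcb]

theorem rename_swap_comm {a b c d : ι} (hca : c ≠ a) (hcb : c ≠ b) (hda : d ≠ a)
    (hdb : d ≠ b) (p : MvPolynomial ι R) :
    rename (Equiv.swap a b) (rename (Equiv.swap c d) p) =
      rename (Equiv.swap c d) (rename (Equiv.swap a b) p) := by
  have : Equiv.swap a b * Equiv.swap c d = Equiv.swap c d * Equiv.swap a b := by
    ext x; simp only [Equiv.Perm.coe_mul, Function.comp_apply, Equiv.swap_apply_def]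
    split_ifs <;> simp_all
  rw [rename_rename, rename_rename, ← Equiv.Perm.coe_mul, ← Equiv.Perm.coe_mul, this]

theorem rename_swap_braid {a b c : ι} (hab : a ≠ b) (hac : a ≠ c) (hbc : b ≠ c)
    (p : MvPolynomial ι R) :
    rename (Equiv.swap a b) (rename (Equiv.swap b c) (rename (Equiv.swap a b) p)) =
      rename (Equiv.swap b c) (rename (Equiv.swap a b) (rename (Equiv.swap b c) p)) := by
  have : Equiv.swap a b * Equiv.swap b c * Equiv.swap a b =
      Equiv.swap b c * Equiv.swap a b * Equiv.swap b c := by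
    rw [Equiv.swap_comm a b, Equiv.swap_comm b c, Equiv.swap_mul_swap_mul_swap hbc.symm hac.symm,
      Equiv.swap_comm c b, Equiv.swap_comm b a, Equiv.swap_mul_swap_mul_swap hab hac,
      Equiv.swap_comm]
  simp only [rename_rename, ← Equiv.Perm.coe_mul, ← mul_assoc, this]

end MvPolynomial

def IsDemazureOperator {ι R : Type*} [CommRing R] [DecidableEq ι] (a b : ι)
    (D : Module.End R (MvPolynomial ι R)) : Prop :=
  ∀ f, (X a - X b) * D f = rename (Equiv.swap a b) f - f

namespace IsDemazureOperator

variable {ι R : Type*} [CommRing R] [DecidableEq ι] {a b c d : ι}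
  {D E : Module.End R (MvPolynomial ι R)}

theorem neg (hD : IsDemazureOperator a b D) : IsDemazureOperator b a (-D) := fun f => by
  rw [LinearMap.neg_apply, Equiv.swap_comm, ← hD f]
  ring

theorem mul_mul_apply_apply (hD : IsDemazureOperator a b D) (hE : IsDemazureOperator c d E)
    (hca : c ≠ a) (hcb : c ≠ b) (hda : d ≠ a) (hdb : d ≠ b) (f : MvPolynomial ι R) :
    (X a - X b) * (X c - X d) * D (E f) =
      rename (Equiv.swap a b) (rename (Equiv.swap c d) f) - rename (Equiv.swap a b) f
        - rename (Equiv.swap c d) f + f := by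
  have h := congrArg (rename (Equiv.swap a b)) (hE f)
  simp only [map_mul, map_sub, rename_swap_X_of_ne hca hcb, rename_swap_X_of_ne hda hdb] at h
  linear_combination (X c - X d) * hD (E f) + h - hE f

variable [IsDomain R]

theorem rename_swap_apply (hD : IsDemazureOperator a b D) (hab : a ≠ b) (f : MvPolynomial ι R) :
    rename (Equiv.swap a b) (D f) = D f := by
  apply mul_left_cancel₀ (X_sub_X_ne_zero (R := R) hab)
  have h := congrArg (rename (Equiv.swap a b)) (hD f)
  simp only [map_mul, map_sub, rename_X, Equiv.swap_apply_left, Equiv.swap_apply_right,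
    rename_swap_rename_swap] at h
  linear_combination -h - hD f

theorem apply_mul (hD : IsDemazureOperator a b D) (hab : a ≠ b) (f g : MvPolynomial ι R) :
    D (f * g) = rename (Equiv.swap a b) f * D g + D f * g := by
  apply mul_left_cancel₀ (X_sub_X_ne_zero (R := R) hab)
  rw [hD, map_mul]
  linear_combination -(rename (Equiv.swap a b) f) * hD g - g * hD f

theorem apply_X_left (hD : IsDemazureOperator a b D) (hab : a ≠ b) : D (X a) = -1 := by
  apply mul_left_cancel₀ (X_sub_X_ne_zero (R := R) hab)
  rw [hD, rename_X, Equiv.swap_apply_left]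
  ring

theorem apply_X_right (hD : IsDemazureOperator a b D) (hab : a ≠ b) : D (X b) = 1 := by
  apply mul_left_cancel₀ (X_sub_X_ne_zero (R := R) hab)
  rw [hD, rename_X, Equiv.swap_apply_right]
  ring

theorem apply_X_of_ne (hD : IsDemazureOperator a b D) (hab : a ≠ b) (hca : c ≠ a)
    (hcb : c ≠ b) : D (X c) = 0 := by
  apply mul_left_cancel₀ (X_sub_X_ne_zero (R := R) hab)
  rw [hD, rename_swap_X_of_ne hca hcb]
  ring

theorem mul_self_eq_zero (hD : IsDemazureOperator a b D) (hab : a ≠ b) : D * D = 0 := by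
  refine LinearMap.ext fun f => ?_
  apply mul_left_cancel₀ (X_sub_X_ne_zero (R := R) hab)
  rw [Module.End.mul_apply, hD, rename_swap_apply hD hab, LinearMap.zero_apply]
  ring

theorem mul_comm (hD : IsDemazureOperator a b D) (hE : IsDemazureOperator c d E)
    (hab : a ≠ b) (hcd : c ≠ d) (hca : c ≠ a) (hcb : c ≠ b) (hda : d ≠ a)
    (hdb : d ≠ b) : D * E = E * D := by
  refine LinearMap.ext fun f => ?_
  apply mul_left_cancel₀ (mul_ne_zero (X_sub_X_ne_zero (R := R) hab) (X_sub_X_ne_zero hcd))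
  rw [Module.End.mul_apply, Module.End.mul_apply, mul_mul_apply_apply hD hE hca hcb hda hdb,
    _root_.mul_comm (X a - X b), mul_mul_apply_apply hE hD hca.symm hda.symm hcb.symm hdb.symm,
    rename_swap_comm hca hcb hda hdb]
  ring

theorem mul_mul_mul_apply_apply_apply (hD : IsDemazureOperator a b D)
    (hE : IsDemazureOperator b c E) (hab : a ≠ b) (hac : a ≠ c) (hbc : b ≠ c)
    (f : MvPolynomial ι R) :
    (X a - X b) * (X b - X c) * (X a - X c) * D (E (D f)) =
      rename (Equiv.swap a b) (rename (Equiv.swap b c) (rename (Equiv.swap a b) f))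
        - rename (Equiv.swap a b) (rename (Equiv.swap b c) f)
        - rename (Equiv.swap b c) (rename (Equiv.swap a b) f)
        + rename (Equiv.swap b c) f + rename (Equiv.swap a b) f - f := by
  have e1 := hD f
  have e2 := hE (D f)
  have e3 := hD (E (D f))
  have sbc_e1 := congrArg (rename (Equiv.swap b c)) e1
  have sab_e2 := congrArg (rename (Equiv.swap a b)) e2
  have sab_sbc_e1 := congrArg (rename (Equiv.swap a b)) sbc_e1
  simp only [map_mul, map_sub, rename_X, Equiv.swap_apply_left, Equiv.swap_apply_right,
    Equiv.swap_apply_of_ne_of_ne, rename_swap_apply hD hab, hab, hac, hac.symm, hbc.symm, ne_eq,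
    not_false_eq_true] at sbc_e1 sab_e2 sab_sbc_e1
  linear_combination (X b - X c) * (X a - X c) * e3 + (X b - X c) * sab_e2 - (X a - X c) * e2
    + sab_sbc_e1 - sbc_e1 + e1

theorem braid (hD : IsDemazureOperator a b D) (hE : IsDemazureOperator b c E) (hab : a ≠ b)
    (hac : a ≠ c) (hbc : b ≠ c) : D * E * D = E * D * E := by
  refine LinearMap.ext fun f => ?_
  apply mul_left_cancel₀ (mul_ne_zero (mul_ne_zero (X_sub_X_ne_zero (R := R) hab)
    (X_sub_X_ne_zero hbc)) (X_sub_X_ne_zero hac))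
  have hDED := mul_mul_mul_apply_apply_apply hD hE hab hac hbc f
  -- `-E` and `-D` are the Demazure operators of `(c, b)` and `(b, a)`, so the same identity
  -- computes `E D E`.
  have hEDE := mul_mul_mul_apply_apply_apply hE.neg hD.neg hbc.symm hac.symm hab.symm f
  simp only [LinearMap.neg_apply, map_neg, Equiv.swap_comm c b, Equiv.swap_comm b a] at hEDE
  simp only [Module.End.mul_apply]
  linear_combination hDED - hEDE + rename_swap_braid hab hac hbc f

theorem lmul_X_right_mul_sub_mul_lmul_X_left (hD : IsDemazureOperator a b D) (hab : a ≠ b) :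
    Algebra.lmul R _ (X b) * D - D * Algebra.lmul R _ (X a) = 1 := by
  refine LinearMap.ext fun f => ?_
  simp only [LinearMap.sub_apply, Module.End.mul_apply, Module.End.one_apply,
    Algebra.coe_lmul_eq_mul, LinearMap.mul_apply', apply_mul hD hab, rename_X,
    Equiv.swap_apply_left, apply_X_left hD hab]
  ring

theorem mul_lmul_X_right_sub_lmul_X_left_mul (hD : IsDemazureOperator a b D) (hab : a ≠ b) :
    D * Algebra.lmul R _ (X b) - Algebra.lmul R _ (X a) * D = 1 := by
  refine LinearMap.ext fun f => ?_
  simp only [LinearMap.sub_apply, Module.End.mul_apply, Module.End.one_apply,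
    Algebra.coe_lmul_eq_mul, LinearMap.mul_apply', apply_mul hD hab, rename_X,
    Equiv.swap_apply_right, apply_X_right hD hab]
  ring

theorem mul_lmul_X_of_ne (hD : IsDemazureOperator a b D) (hab : a ≠ b) (hca : c ≠ a)
    (hcb : c ≠ b) : D * Algebra.lmul R _ (X c) = Algebra.lmul R _ (X c) * D := by
  refine LinearMap.ext fun f => ?_
  simp only [Module.End.mul_apply, Algebra.coe_lmul_eq_mul, LinearMap.mul_apply',
    apply_mul hD hab, rename_swap_X_of_ne hca hcb, apply_X_of_ne hD hab hca hcb]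
  ring

end IsDemazureOperator

theorem statement_14 {k : Type} [Field k] {n : ℕ}
    (D : Fin n → Module.End k (MvPolynomial (Fin (n + 1)) k))
    (hD : IsDemazureFamily D) :
    -- (i) `∂_i ∘ ∂_i = 0`
    (∀ i : Fin n, D i * D i = 0) ∧
    -- (ii) `∂_i ∘ ∂_j = ∂_j ∘ ∂_i` whenever `|i − j| ≥ 2`
    (∀ i j : Fin n, 2 ≤ Nat.dist i.val j.val → D i * D j = D j * D i) ∧
    -- (iii) the braid relation `∂_i ∘ ∂_{i+1} ∘ ∂_i = ∂_{i+1} ∘ ∂_i ∘ ∂_{i+1}`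
    (∀ i j : Fin n, j.val = i.val + 1 → D i * D j * D i = D j * D i * D j) ∧
    -- (iv) `m_{X_{i+1}} ∘ ∂_i − ∂_i ∘ m_{X_i} = id` and `∂_i ∘ m_{X_{i+1}} − m_{X_i} ∘ ∂_i = id`
    (∀ i : Fin n,
      Algebra.lmul k (MvPolynomial (Fin (n + 1)) k) (X i.succ) * D i
          - D i * Algebra.lmul k (MvPolynomial (Fin (n + 1)) k) (X i.castSucc) = 1 ∧
      D i * Algebra.lmul k (MvPolynomial (Fin (n + 1)) k) (X i.succ)
          - Algebra.lmul k (MvPolynomial (Fin (n + 1)) k) (X i.castSucc) * D i = 1) ∧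
    -- (v) `∂_i` commutes with `m_{X_j}` for `j ∉ {i, i+1}`, and multiplication
    -- operators commute with each other
    (∀ (i : Fin n) (j : Fin (n + 1)), j ≠ i.castSucc → j ≠ i.succ →
      D i * Algebra.lmul k (MvPolynomial (Fin (n + 1)) k) (X j)
        = Algebra.lmul k (MvPolynomial (Fin (n + 1)) k) (X j) * D i) ∧
    (∀ f g : MvPolynomial (Fin (n + 1)) k,
      Algebra.lmul k (MvPolynomial (Fin (n + 1)) k) f
          * Algebra.lmul k (MvPolynomial (Fin (n + 1)) k) g
        = Algebra.lmul k (MvPolynomial (Fin (n + 1)) k) g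
          * Algebra.lmul k (MvPolynomial (Fin (n + 1)) k) f) := by
  have hDi : ∀ i, IsDemazureOperator i.castSucc i.succ (D i) := hD
  have hne : ∀ i : Fin n, i.castSucc ≠ i.succ := fun i => Fin.castSucc_lt_succ.ne
  refine ⟨fun i => (hDi i).mul_self_eq_zero (hne i), fun i j hij => ?_, fun i j hij => ?_,
    fun i => ⟨(hDi i).lmul_X_right_mul_sub_mul_lmul_X_left (hne i),
      (hDi i).mul_lmul_X_right_sub_lmul_X_left_mul (hne i)⟩,
    fun i c hci hci' => (hDi i).mul_lmul_X_of_ne (hne i) hci hci',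
    fun f g => by rw [← map_mul, mul_comm, map_mul]⟩
  · unfold Nat.dist at hij
    refine (hDi i).mul_comm (hDi j) (hne i) (hne j) ?_ ?_ ?_ ?_ <;>
      simp only [ne_eq, Fin.ext_iff, Fin.val_castSucc, Fin.val_succ] <;> omega
  · have hji : j.castSucc = i.succ := Fin.ext (by simp [hij])
    have hDj : IsDemazureOperator i.succ j.succ (D j) := hji ▸ hDi j
    refine (hDi i).braid hDj (hne i) ?_ ?_ <;>
      simp only [ne_eq, Fin.ext_iff, Fin.val_castSucc, Fin.val_succ] <;> omega
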